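/- arXiv:1301.6572 — 4 statements merged into one kernel-verified Lean document; each statement's English description precedes it below -/
import Mathlib

section
/- Let m₁, m₂, m₃ be markings of an ωPN and σ a sequence of transitions with m₁ →σ m₂. Let P′ = {p | some transition in σ has O(t)(p) = ω}. If m₃(p) ≥ m₂(p) for all p ∈ P′ and m₃(p) = m₂(p) for all p ∉ P′, then m₁ →σ m₃. -/
/-- An ω-Petri net over a set of places `P`: a set `T` of transitions,
each with input and output valuations in ℕ ∪ {ω} (modelled as `WithTop ℕ`). -/
structure OmegaPN (P : Type) where
  T : Type
  I : T → P → WithTop ℕ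
  O : T → P → WithTop ℕ

namespace OmegaPN

variable {P : Type}

/-- Concrete firing: `t` is firable from `m` (i.e. `m p ≥ I t p` whenever
`I t p ≠ ω`) and `m'` is obtained by consuming `i p` tokens (with `i p = I t p`
if finite, an arbitrary value `≤ m p` if `I t p = ω`) and producing `o p` tokens
(with `o p = O t p` if finite, arbitrary if `O t p = ω`) in each place `p`. -/
def Fires (N : OmegaPN P) (t : N.T) (m m' : P → ℕ) : Prop :=
  ∃ i o : P → ℕ,
    (∀ p, N.I t p ≠ ⊤ → (i p : WithTop ℕ) = N.I t p) ∧
    (∀ p, N.O t p ≠ ⊤ → (o p : WithTop ℕ) = N.O t p) ∧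
    (∀ p, i p ≤ m p) ∧
    (∀ p, m' p = m p - i p + o p)

/-- `m →σ m'` : firing the finite sequence `σ` of transitions from `m` can yield `m'`. -/
inductive FiresSeq (N : OmegaPN P) : List N.T → (P → ℕ) → (P → ℕ) → Prop
  | nil (m : P → ℕ) : FiresSeq N [] m m
  | cons {t : N.T} {σ : List N.T} {m m₁ m₂ : P → ℕ} :
      N.Fires t m m₁ → FiresSeq N σ m₁ m₂ → FiresSeq N (t :: σ) m m₂

variable {N : OmegaPN P}

theorem Fires.add_right {t : N.T} {m m' : P → ℕ} (h : N.Fires t m m') (c : P → ℕ) :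
    N.Fires t (m + c) (m' + c) := by
  obtain ⟨i, o, hi, ho, hle, heq⟩ := h
  refine ⟨i, o, hi, ho, fun p => (hle p).trans (Nat.le_add_right _ _), fun p => ?_⟩
  have := hle p
  simp only [Pi.add_apply, heq p]
  omega

theorem Fires.add_output {t : N.T} {m m' c : P → ℕ} (h : N.Fires t m m')
    (hc : ∀ p, c p ≠ 0 → N.O t p = ⊤) : N.Fires t m (m' + c) := by
  obtain ⟨i, o, hi, ho, hle, heq⟩ := h
  refine ⟨i, o + c, hi, fun p hp => ?_, hle, fun p => ?_⟩
  · have hcp : c p = 0 := by_contra fun h => hp (hc p h)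
    simpa [hcp] using ho p hp
  · simp only [Pi.add_apply, heq p]
    omega

theorem FiresSeq.add_right {σ : List N.T} {m m' : P → ℕ} (h : N.FiresSeq σ m m') (c : P → ℕ) :
    N.FiresSeq σ (m + c) (m' + c) := by
  induction h with
  | nil m => exact .nil _
  | cons hf _ ih => exact .cons (hf.add_right c) ih

/-- The extra tokens on a place are produced by the last transition of `σ` with an ω-output
there; firing the earlier transitions from a larger marking is harmless by monotonicity. -/
theorem FiresSeq.add_output {σ : List N.T} {m m' c : P → ℕ} (h : N.FiresSeq σ m m')
    (hc : ∀ p, c p ≠ 0 → ∃ t ∈ σ, N.O t p = ⊤) : N.FiresSeq σ m (m' + c) := by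
  induction h generalizing c with
  | nil m =>
    obtain rfl : c = 0 := funext fun p => by_contra fun hp => by simpa using hc p hp
    simpa using FiresSeq.nil m
  | @cons t σ m m₁ m₂ hf _ ih =>
    set later : Set P := {p | ∃ t' ∈ σ, N.O t' p = ⊤}
    have hfirst : N.Fires t m (m₁ + laterᶜ.indicator c) := hf.add_output fun p hp => by
      rw [Set.indicator_apply_ne_zero] at hp
      obtain ⟨t', ht', hω⟩ := hc p hp.2
      rcases List.mem_cons.mp ht' with rfl | ht'
      · exact hω
      · exact absurd ⟨t', ht', hω⟩ hp.1
    have hrest : N.FiresSeq σ m₁ (m₂ + later.indicator c) := ih fun p hp =>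
      (Set.indicator_apply_ne_zero.mp hp).1
    have := FiresSeq.cons hfirst (hrest.add_right (laterᶜ.indicator c))
    rwa [add_assoc, Set.indicator_self_add_compl] at this

end OmegaPN

open OmegaPN

/-- If `m₁ →σ m₂`, and `m₃` dominates `m₂` on the places receiving an ω-output
in σ and agrees with `m₂` elsewhere, then `m₁ →σ m₃` as well. -/
theorem reachable_upward_closed {P : Type} (N : OmegaPN P)
    (σ : List N.T) (m₁ m₂ m₃ : P → ℕ)
    (h1 : N.FiresSeq σ m₁ m₂)
    (h2 : ∀ p, (∃ t ∈ σ, N.O t p = ⊤) → m₂ p ≤ m₃ p)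
    (h3 : ∀ p, ¬ (∃ t ∈ σ, N.O t p = ⊤) → m₃ p = m₂ p) :
    N.FiresSeq σ m₁ m₃ := by
  have hle : m₂ ≤ m₃ := fun p => by
    by_cases hp : ∃ t ∈ σ, N.O t p = ⊤
    · exact h2 p hp
    · exact (h3 p hp).ge
  have hω : ∀ p, (m₃ - m₂) p ≠ 0 → ∃ t ∈ σ, N.O t p = ⊤ := fun p hp =>
    by_contra fun hnot => hp (by simp [h3 p hnot])
  simpa [add_tsub_cancel_of_le hle] using h1.add_output hω
end

section
/- Let N be an ωPN and remIω(N) the ωPN obtained by replacing every ω-labeled input value by 0 (i.e., I′(t)(p) = 0 whenever I(t)(p) = ω and I′(t)(p) = I(t)(p) otherwise, outputs unchanged). Then: (a) every execution m₀,t₁′,m₁,…,tₙ′,mₙ of remIω(N) is also an execution of N (with the corresponding transitions); (b) for every execution m₀,t₁,m₁,…,tₙ,mₙ of N there is an execution m₀,t₁′,m₁′,…,tₙ′,mₙ′ of remIω(N) with m_i ≼ m_i′ for all i. Consequently, N terminates iff remIω(N) terminates. -/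
open OmegaPN

/-- `remIω(N)`: replace every ω-labeled input value by `0`, outputs unchanged. -/
def OmegaPN.remIw {P : Type} (N : OmegaPN P) : OmegaPN P where
  T := N.T
  I := fun t p => if N.I t p = ⊤ then 0 else N.I t p
  O := N.O

/- Firing a transition of `remIω(N)` is a firing of `N` in which every ω-input happens to consume
nothing. Conversely, consuming nothing on ω-inputs only leaves more tokens, so from any larger
marking `remIω(N)` can mimic a firing of `N` and stay above it; iterating this simulation step
along an execution of `N` (finite or infinite) yields a dominating execution of `remIω(N)`. -/

section Simulation

variable {α ι : Type*} (r : α → α → Prop) (g : ι → α → α → Prop) (ts : ℕ → ι) (ms : ℕ → α)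

/-- Follows `g` along the labels `ts` from `a`, choosing each successor `r`-above `ms`;
when no such successor exists the value `ms (i + 1)` is junk. -/
noncomputable def simChain (a : α) : ℕ → α
  | 0 => a
  | i + 1 =>
    open Classical in
    if h : ∃ b, g (ts i) (simChain a i) b ∧ r (ms (i + 1)) b then h.choose else ms (i + 1)

variable {r g ts ms} {f : ι → α → α → Prop}
  (hsim : ∀ t a b a', f t a b → r a a' → ∃ b', g t a' b' ∧ r b b')
include hsim

theorem simChain_step {a : α} {i : ℕ} (hf : f (ts i) (ms i) (ms (i + 1)))
    (hr : r (ms i) (simChain r g ts ms a i)) :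
    g (ts i) (simChain r g ts ms a i) (simChain r g ts ms a (i + 1)) ∧
      r (ms (i + 1)) (simChain r g ts ms a (i + 1)) := by
  have hex := hsim _ _ _ _ hf hr
  rw [simChain, dif_pos hex]
  exact hex.choose_spec

theorem rel_simChain {a : α} (h0 : r (ms 0) a) {n : ℕ}
    (hf : ∀ i < n, f (ts i) (ms i) (ms (i + 1))) : r (ms n) (simChain r g ts ms a n) := by
  induction n with
  | zero => exact h0
  | succ n ih =>
    exact (simChain_step hsim (hf n n.lt_succ_self) (ih fun i hi => hf i (by omega))).2

end Simulation

namespace OmegaPN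

variable {P : Type} {N : OmegaPN P} {t : N.T}

theorem remIw_I_ne_top (p : P) : N.remIw.I t p ≠ ⊤ := by
  by_cases h : N.I t p = ⊤ <;> simp [remIw, h]

theorem remIw_I_of_ne_top {p : P} (h : N.I t p ≠ ⊤) : N.remIw.I t p = N.I t p := if_neg h

theorem Fires.of_remIw {m m' : P → ℕ} (h : N.remIw.Fires t m m') : N.Fires t m m' := by
  obtain ⟨i, o, hi, ho, hle, hm⟩ := h
  exact ⟨i, o, fun p hp => (hi p (remIw_I_ne_top p)).trans (remIw_I_of_ne_top hp), ho, hle, hm⟩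

theorem FiresSeq.of_remIw {σ : List N.T} {m m' : P → ℕ} :
    N.remIw.FiresSeq σ m m' → N.FiresSeq σ m m'
  | .nil m => .nil m
  | .cons hfire hseq => .cons hfire.of_remIw hseq.of_remIw

theorem Fires.exists_remIw_fires_ge {m m₁ m' : P → ℕ} (h : N.Fires t m m₁) (hle : m ≤ m') :
    ∃ m₁', N.remIw.Fires t m' m₁' ∧ m₁ ≤ m₁' := by
  classical
  obtain ⟨i, o, hi, ho, hile, hm⟩ := h
  let i' : P → ℕ := fun p => if N.I t p = ⊤ then 0 else i p
  refine ⟨fun p => m' p - i' p + o p, ⟨i', o, fun p _ => ?_, ho, fun p => ?_, fun _ => rfl⟩,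
    fun p => ?_⟩
  · by_cases hp : N.I t p = ⊤
    · simp [i', remIw, hp]
    · simpa [i', remIw_I_of_ne_top hp, hp] using hi p hp
  · by_cases hp : N.I t p = ⊤
    · simp [i', hp]
    · simpa [i', hp] using (hile p).trans (hle p)
  · have : i' p ≤ i p := by by_cases hp : N.I t p = ⊤ <;> simp [i', hp]
    have : m p ≤ m' p := hle p
    have := hile p
    dsimp only
    rw [hm p]
    omega

end OmegaPN

/-- (a) every execution of `remIω(N)` is an execution of `N`;
(b) every execution of `N` is dominated, step by step, by an execution of
`remIω(N)` over the same transitions; consequently (c) `N` has an infinite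
execution from `m₀` iff `remIω(N)` does, i.e. `N` terminates iff `remIω(N)` does. -/
theorem remIw_spec {P : Type} (N : OmegaPN P) :
    (∀ (σ : List N.T) (m m' : P → ℕ), N.remIw.FiresSeq σ m m' → N.FiresSeq σ m m') ∧
    (∀ (n : ℕ) (ts : ℕ → N.T) (ms : ℕ → P → ℕ),
        (∀ i < n, N.Fires (ts i) (ms i) (ms (i + 1))) →
        ∃ ms' : ℕ → P → ℕ, ms' 0 = ms 0 ∧
          (∀ i < n, N.remIw.Fires (ts i) (ms' i) (ms' (i + 1))) ∧
          ∀ i ≤ n, ∀ p, ms i p ≤ ms' i p) ∧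
    (∀ m₀ : P → ℕ,
      (∃ (ts : ℕ → N.T) (ms : ℕ → P → ℕ), ms 0 = m₀ ∧
          ∀ i : ℕ, N.Fires (ts i) (ms i) (ms (i + 1))) ↔
      (∃ (ts : ℕ → N.T) (ms : ℕ → P → ℕ), ms 0 = m₀ ∧
          ∀ i : ℕ, N.remIw.Fires (ts i) (ms i) (ms (i + 1)))) := by
  have hsim : ∀ (t : N.T) (m m₁ m' : P → ℕ), N.Fires t m m₁ → m ≤ m' →
      ∃ m₁', N.remIw.Fires t m' m₁' ∧ m₁ ≤ m₁' := fun _ _ _ _ h => h.exists_remIw_fires_ge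
  refine ⟨fun _ _ _ => FiresSeq.of_remIw, fun n ts ms h => ?_, fun m₀ => ⟨?_, ?_⟩⟩
  · have hdom : ∀ i ≤ n, ms i ≤ simChain (· ≤ ·) N.remIw.Fires ts ms (ms 0) i :=
      fun i hi => rel_simChain hsim le_rfl fun j hj => h j (by omega)
    exact ⟨simChain (· ≤ ·) N.remIw.Fires ts ms (ms 0), rfl,
      fun i hi => (simChain_step hsim (h i hi) (hdom i hi.le)).1, hdom⟩
  · rintro ⟨ts, ms, rfl, h⟩
    exact ⟨ts, simChain (· ≤ ·) N.remIw.Fires ts ms (ms 0), rfl, fun i =>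
      (simChain_step hsim (h i) (rel_simChain hsim le_rfl fun j _ => h j)).1⟩
  · rintro ⟨ts, ms, rfl, h⟩
    exact ⟨ts, ms, rfl, fun i => (h i).of_remIw⟩
end

section
/- Every ωOPN with reset arcs (ωOPN+R) can be transformed into an ωOPN with transfer arcs (ωOPN+T) that terminates iff the original net terminates, by replacing each reset of a place p with a transfer of p's tokens into a fresh sink place p_trash from which no transition consumes. -/
/-!
The trash place is never consumed from, so forgetting it maps runs of the transfer net to runs
of the original net; conversely, a run of the original net lifts to the transfer net by letting
the trash place collect the tokens each reset removes. Both are instances of the fact that a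
forward simulation reflects non-termination.
-/

/-- A special arc of an extended net: a reset of a place, or a transfer from a
source place to a target place. -/
inductive Special (P : Type) where
  | reset (p : P)
  | transfer (src tgt : P)

/-- An ω-output Petri net with (at most one per transition) reset or transfer
arcs: inputs are plain naturals (no ω-input arcs), outputs lie in ℕ ∪ {ω}. -/
structure EPN (P : Type) where
  T : Type
  I : T → P → ℕ
  O : T → P → WithTop ℕ
  sp : T → Option (Special P)
  init : P → ℕ

namespace EPN

variable {P : Type}

/-- Concrete firing of a transition of an extended net. -/
def Fires (N : EPN P) (t : N.T) (m m' : P → ℕ) : Prop :=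
  ∃ o : P → ℕ,
    (∀ p, N.O t p ≠ ⊤ → ((o p : ℕ) : WithTop ℕ) = N.O t p) ∧
    match N.sp t with
    | none =>
        (∀ p, N.I t p ≤ m p) ∧ ∀ p, m' p = m p - N.I t p + o p
    | some (.reset r) =>
        (∀ p, p ≠ r → N.I t p ≤ m p) ∧
        m' r = o r ∧ ∀ p, p ≠ r → m' p = m p - N.I t p + o p
    | some (.transfer s tg) =>
        s ≠ tg ∧
        (∀ p, p ≠ s → N.I t p ≤ m p) ∧
        m' s = o s ∧ m' tg = m tg - N.I t tg + o tg + m s ∧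
        ∀ p, p ≠ s → p ≠ tg → m' p = m p - N.I t p + o p

/-- The net terminates: no infinite execution from the initial marking. -/
def Terminates (N : EPN P) : Prop :=
  ¬ ∃ (ts : ℕ → N.T) (ms : ℕ → P → ℕ), ms 0 = N.init ∧
      ∀ n : ℕ, N.Fires (ts n) (ms n) (ms (n + 1))

/-- The net only uses reset special arcs (an ωOPN+R). -/
def IsResetNet (N : EPN P) : Prop :=
  ∀ (t : N.T) (s tg : P), N.sp t ≠ some (.transfer s tg)

/-- The net only uses transfer special arcs (an ωOPN+T). -/
def IsTransferNet (N : EPN P) : Prop :=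
  ∀ (t : N.T) (r : P), N.sp t ≠ some (.reset r)

/-- Replace every reset of a place `p` by a transfer of `p`'s tokens into a
fresh sink place `p_trash` (the `Sum.inr` place), from which no transition
consumes; everything else is unchanged. -/
def toTransfer (N : EPN P) : EPN (P ⊕ Unit) where
  T := N.T
  I := fun t q => match q with | .inl p => N.I t p | .inr _ => 0
  O := fun t q => match q with | .inl p => N.O t p | .inr _ => 0
  sp := fun t =>
    match N.sp t with
    | none => none
    | some (.reset p) => some (.transfer (Sum.inl p) (Sum.inr ()))
    | some (.transfer s tg) => some (.transfer (Sum.inl s) (Sum.inl tg))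
  init := fun q => match q with | .inl p => N.init p | .inr _ => 0

theorem toTransfer_isTransferNet (N : EPN P) : (toTransfer N).IsTransferNet := by
  intro t r h
  rcases hsp : N.sp t with _ | (p | ⟨s, tg⟩) <;> simp [toTransfer, hsp] at h

theorem Terminates.of_simulation {Q : Type} {N : EPN P} {M : EPN Q}
    (R : (P → ℕ) → (Q → ℕ) → Prop) (hinit : R N.init M.init)
    (hstep : ∀ t m m' n, R m n → N.Fires t m m' → ∃ t' n', M.Fires t' n n' ∧ R m' n')
    (hM : M.Terminates) : N.Terminates := by
  rintro ⟨ts, ms, h0, hfires⟩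
  have hnext : ∀ k (n : {n // R (ms k) n}),
      ∃ (t' : M.T) (n' : {n' // R (ms (k + 1)) n'}), M.Fires t' n n' := by
    rintro k ⟨n, hn⟩
    obtain ⟨t', n', hf, hR⟩ := hstep _ _ _ n hn (hfires k)
    exact ⟨t', ⟨n', hR⟩, hf⟩
  choose ts' next hnext using hnext
  let run : ∀ k, {n // R (ms k) n} := fun k => Nat.rec ⟨M.init, h0 ▸ hinit⟩ next k
  exact hM ⟨fun k => ts' k (run k), fun k => (run k).1, rfl, fun k => hnext k (run k)⟩

theorem fires_of_toTransfer_fires {N : EPN P} {t : N.T} {n n' : P ⊕ Unit → ℕ}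
    (h : (toTransfer N).Fires t n n') : N.Fires t (n ∘ Sum.inl) (n' ∘ Sum.inl) := by
  obtain ⟨o, ho, hrest⟩ := h
  refine ⟨o ∘ Sum.inl, fun p hp => ho (Sum.inl p) hp, ?_⟩
  rcases hsp : N.sp t with _ | (r | ⟨s, tg⟩) <;> simp only [toTransfer, hsp] at hrest
  · exact ⟨fun p => hrest.1 (Sum.inl p), fun p => hrest.2 (Sum.inl p)⟩
  · obtain ⟨-, henabled, hr, -, hother⟩ := hrest
    exact ⟨fun p hp => henabled (Sum.inl p) (by simpa using hp), hr,
      fun p hp => hother (Sum.inl p) (by simpa using hp) (by simp)⟩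
  · obtain ⟨hne, henabled, hs, htg, hother⟩ := hrest
    exact ⟨fun h => hne (congrArg Sum.inl h),
      fun p hp => henabled (Sum.inl p) (by simpa using hp), hs, htg,
      fun p hs' htg' => hother (Sum.inl p) (by simpa using hs') (by simpa using htg')⟩

def resetTokens (N : EPN P) (t : N.T) (m : P → ℕ) : ℕ :=
  match N.sp t with
  | some (.reset p) => m p
  | _ => 0

theorem toTransfer_fires_of_fires {N : EPN P} {t : N.T} {m m' : P → ℕ} (h : N.Fires t m m')
    (k : ℕ) :
    (toTransfer N).Fires t (Sum.elim m fun _ => k)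
      (Sum.elim m' fun _ => k + resetTokens N t m) := by
  obtain ⟨o, ho, hrest⟩ := h
  refine ⟨Sum.elim o fun _ => 0, ?_, ?_⟩
  · rintro (p | u) hp
    · exact ho p hp
    · simp [toTransfer]
  rcases hsp : N.sp t with _ | (r | ⟨s, tg⟩) <;> rw [hsp] at hrest <;>
    simp only [toTransfer, hsp]
  · exact ⟨by rintro (p | u) <;> simp [hrest.1],
      by rintro (p | u) <;> simp [hrest.2, resetTokens, hsp]⟩
  · obtain ⟨henabled, hr, hother⟩ := hrest
    refine ⟨by simp, ?_, by simpa using hr, by simp [resetTokens, hsp], ?_⟩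
    · rintro (p | u) hp
      · exact henabled p (by simpa using hp)
      · simp
    · rintro (p | u) hp hu
      · simpa using hother p (by simpa using hp)
      · exact absurd rfl hu
  · obtain ⟨hne, henabled, hs, htg, hother⟩ := hrest
    refine ⟨by simpa using hne, ?_, by simpa using hs,
      by simpa [resetTokens, hsp] using htg, ?_⟩
    · rintro (p | u) hp
      · exact henabled p (by simpa using hp)
      · simp
    · rintro (p | u) hp htg'
      · simpa using hother p (by simpa using hp) (by simpa using htg')
      · simp [resetTokens, hsp]

theorem toTransfer_terminates_of_terminates {N : EPN P} (h : N.Terminates) :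
    (toTransfer N).Terminates :=
  Terminates.of_simulation (fun n m => m = n ∘ Sum.inl) rfl
    (fun t _ n' _ hR hf => ⟨t, n' ∘ Sum.inl, hR ▸ fires_of_toTransfer_fires hf, rfl⟩) h

theorem terminates_of_toTransfer_terminates {N : EPN P} (h : (toTransfer N).Terminates) :
    N.Terminates := by
  refine Terminates.of_simulation (fun m n => ∃ k, n = Sum.elim m fun _ => k) ⟨0, ?_⟩ ?_ h
  · funext q
    rcases q with p | u <;> rfl
  · rintro t m m' _ ⟨k, rfl⟩ hf
    exact ⟨t, _, toTransfer_fires_of_fires hf k, _, rfl⟩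

theorem reset_to_transfer_general (N : EPN P) :
    (toTransfer N).IsTransferNet ∧ (N.Terminates ↔ (toTransfer N).Terminates) :=
  ⟨toTransfer_isTransferNet N, toTransfer_terminates_of_terminates,
    terminates_of_toTransfer_terminates⟩

/-- Every ωOPN+R can be transformed into an ωOPN+T which terminates iff the
original net terminates. -/
theorem reset_to_transfer (N : EPN P) (hres : N.IsResetNet) :
    (toTransfer N).IsTransferNet ∧ (N.Terminates ↔ (toTransfer N).Terminates) :=
  reset_to_transfer_general N

end EPN
end

section
/- For ω-markings over a finite set P, any downward-closed set of markings (functions P → ℕ) is the downward closure of a finite set of ω-markings. -/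
/-!
The complement of a downward-closed set `D` is upward closed, so by Dickson's lemma it is the
upward closure of its finitely many minimal elements `B`. A marking `m` is not above `b` iff, at
some place `p` with `b p > 0`, it lies below the ω-marking that is `b p - 1` at `p` and `ω`
elsewhere. Hence `D = ⋂ b ∈ B, ⋃ p, ↓(…)`, and distributing this finite intersection over the
finite unions, with `↓x ∩ ↓y = ↓(x ⊓ y)`, leaves a finite union of downward closures.
-/

open Set Function

theorem IsUpperSet.exists_finset_eq_biUnion_Ici {α : Type*} [PartialOrder α]
    [WellQuasiOrderedLE α] {s : Set α} (hs : IsUpperSet s) :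
    ∃ B : Finset α, s = ⋃ b ∈ B, Ici b := by
  have hfin : {x | Minimal (· ∈ s) x}.Finite :=
    WellQuasiOrderedLE.finite_of_isAntichain (setOfPred_minimal_antichain _)
  refine ⟨hfin.toFinset, Subset.antisymm (fun a ha ↦ ?_) ?_⟩
  · obtain ⟨b, hba, hb⟩ := (isPWO_of_wellQuasiOrderedLE s).exists_le_minimal ha
    exact mem_biUnion (hfin.mem_toFinset.2 hb) hba
  · simp only [iUnion_subset_iff, Finite.mem_toFinset]
    exact fun b hb ↦ hs.Ici_subset hb.prop

section FinitelyGeneratedLowerSets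

variable {β : Type*} [SemilatticeInf β]

theorem biUnion_Iic_inter_biUnion_Iic [DecidableEq β] (M N : Finset β) :
    (⋃ x ∈ M, Iic x) ∩ (⋃ y ∈ N, Iic y) = ⋃ z ∈ Finset.image₂ (· ⊓ ·) M N, Iic z := by
  ext a
  simp only [mem_inter_iff, mem_iUnion, mem_Iic, exists_prop, Finset.mem_image₂]
  constructor
  · rintro ⟨⟨x, hx, hax⟩, ⟨y, hy, hay⟩⟩
    exact ⟨x ⊓ y, ⟨x, hx, y, hy, rfl⟩, le_inf hax hay⟩
  · rintro ⟨_, ⟨x, hx, y, hy, rfl⟩, ha⟩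
    exact ⟨⟨x, hx, ha.trans inf_le_left⟩, ⟨y, hy, ha.trans inf_le_right⟩⟩

theorem exists_finset_biInter_biUnion_Iic_eq [OrderTop β] {κ : Type*} (B : Finset κ)
    (T : κ → Finset β) : ∃ M : Finset β, ⋂ b ∈ B, ⋃ x ∈ T b, Iic x = ⋃ x ∈ M, Iic x := by
  classical
  induction B using Finset.induction_on with
  | empty => exact ⟨{⊤}, by simp⟩
  | insert b B _ ih =>
    obtain ⟨M, hM⟩ := ih
    exact ⟨Finset.image₂ (· ⊓ ·) (T b) M, by
      rw [Finset.set_biInter_insert, hM, biUnion_Iic_inter_biUnion_Iic]⟩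

end FinitelyGeneratedLowerSets

section Markings

variable {ι : Type*} [DecidableEq ι]

theorem not_le_iff_exists_le_update_top {b m : ι → ℕ} :
    ¬ b ≤ m ↔ ∃ i, b i ≠ 0 ∧ (↑) ∘ m ≤ update (⊤ : ι → WithTop ℕ) i ↑(b i - 1) := by
  rw [Pi.le_def]
  simp only [not_forall, not_le, le_update_iff, comp_apply, Pi.top_apply, le_top, implies_true,
    and_true, Nat.cast_le]
  exact exists_congr fun i ↦ by omega

theorem exists_finset_compl_Ici_eq_preimage_biUnion_Iic [Fintype ι] (b : ι → ℕ) :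
    ∃ T : Finset (ι → WithTop ℕ),
      (Ici b)ᶜ = (fun m ↦ (↑) ∘ m) ⁻¹' ⋃ x ∈ T, Iic x :=
  ⟨(Finset.univ.filter (b · ≠ 0)).image fun i ↦ update ⊤ i ↑(b i - 1), by
    ext m
    simp [not_le_iff_exists_le_update_top]⟩

end Markings

/-- The ω-markings form an adequate domain of limits: over a finite set `P` of
places, every downward-closed set of markings `P → ℕ` is the downward closure
of a finite set of ω-markings `P → ℕ ∪ {ω}`. -/
theorem downward_closed_finite_basis {P : Type} [Fintype P] [DecidableEq P]
    (D : Set (P → ℕ))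
    (hdc : ∀ m ∈ D, ∀ m' : P → ℕ, (∀ p, m' p ≤ m p) → m' ∈ D) :
    ∃ M : Finset (P → WithTop ℕ),
      D = {m' : P → ℕ | ∃ m ∈ M, ∀ p, ((m' p : ℕ) : WithTop ℕ) ≤ m p} := by
  have hD : IsLowerSet D := fun m m' h hm ↦ hdc m hm m' h
  obtain ⟨B, hB⟩ := hD.compl.exists_finset_eq_biUnion_Ici
  choose T hT using exists_finset_compl_Ici_eq_preimage_biUnion_Iic (ι := P)
  obtain ⟨M, hM⟩ := exists_finset_biInter_biUnion_Iic_eq B T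
  refine ⟨M, ?_⟩
  calc D = (⋃ b ∈ B, Ici b)ᶜ := by rw [← hB, compl_compl]
    _ = (fun m ↦ (↑) ∘ m) ⁻¹' ⋂ b ∈ B, ⋃ x ∈ T b, Iic x := by
      simp only [compl_iUnion, hT, preimage_iInter]
    _ = _ := by
      rw [hM]
      ext m
      simp [Pi.le_def]
end
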